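/- arXiv:2207.04964 — 2 statements merged into one kernel-verified Lean document; each statement's English description precedes it below -/
import Mathlib

section
/- Let H be a finite connected simple graph with maximum degree Δ(H) = d ≥ 5, let p ≥ 2 and q ≥ 3 be integers with p + q = d + 1, let R be a graph with minimum degree δ(R) ≥ p − 1, and let G = K_{q+1} minus an edge. Let S ⊆ V(H) be such that H[S] contains no subgraph isomorphic to R and |S| is maximum among all subsets inducing an R-free subgraph. Then every vertex v ∈ V(H) ∖ S either lies in at most one copy of G in the induced subgraph H[V(H) ∖ S], or lies in a copy of K_{q+1} that forms a connected component of H[V(H) ∖ S]. -/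
open SimpleGraph

/-- The complete graph on `n` vertices minus one edge (the edge between vertices `0` and `1`). -/
def KsubE (n : ℕ) : SimpleGraph (Fin n) where
  Adj a b := a ≠ b ∧ a.val + b.val ≠ 1
  symm := by
    refine ⟨fun a b h => ?_⟩
    exact ⟨h.1.symm, by omega⟩
  loopless := by
    refine ⟨fun a h => ?_⟩
    exact h.1 rfl

/-- `H` contains a (not necessarily induced) subgraph isomorphic to `R`. -/
def Contains {α : Type*} {β : Type*} (H : SimpleGraph α) (R : SimpleGraph β) : Prop :=
  ∃ f : R →g H, Function.Injective f

/-!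
Maximality of `S` puts a copy of `R` inside `H[S ∪ {x}]` for every `x ∉ S`; that copy must use `x`,
whose at least `δ(R) ≥ p - 1` neighbours in it lie in `S`. Hence `H[V ∖ S]` has maximum degree at
most `d - (p - 1) = q`.

In a graph of maximum degree `q`, two copies `T₁, T₂` of `K_{q+1} ∖ e` sharing a vertex have the
same vertex set: each vertex of `I = T₁ ∩ T₂` has at least `|T₂ ∖ T₁|` non-neighbours in `T₁ ∪ T₂`,
and every such non-adjacent pair is one of the two missing edges, which leaves room for at most two
such ordered pairs in total. So `|I| · |T₂ ∖ T₁| ≤ 2` although `|I| + |T₂ ∖ T₁| = q + 1 ≥ 4`.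
Two different copies on the same `q + 1` vertices miss different edges, so these vertices span a
`K_{q+1}`, and a `(q + 1)`-clique in a graph of maximum degree `q` is a whole component.
-/

open Finset

theorem KsubE_adj_iff {n : ℕ} {a b : Fin (n + 1)} :
    (KsubE (n + 1)).Adj a b ↔ a ≠ b ∧ s(a, b) ≠ s(0, 1) := by
  rcases n with _ | n
  · exact iff_of_false (fun h => h.1 (Fin.ext (by omega))) (fun h => h.1 (Fin.ext (by omega)))
  · simp only [KsubE, ne_eq, Sym2.eq_iff, Fin.ext_iff, Fin.val_zero, Fin.val_one]
    omega

section Sym2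

variable {V : Type*} [DecidableEq V]

theorem card_filter_mk_eq_le_one {A B : Finset V} (hAB : Disjoint A B) (e : Sym2 V) :
    #{p ∈ A ×ˢ B | s(p.1, p.2) = e} ≤ 1 := by
  refine card_le_one.2 fun ⟨x, y⟩ hxy ⟨x', y'⟩ hxy' => ?_
  simp only [mem_filter, mem_product] at hxy hxy'
  rcases Sym2.eq_iff.1 (hxy.2.trans hxy'.2.symm) with ⟨rfl, rfl⟩ | ⟨rfl, -⟩
  · rfl
  · exact (disjoint_left.1 hAB hxy.1.1 hxy'.1.2).elim

theorem card_filter_mk_eq_le_two (X : Finset (V × V)) (e : Sym2 V) :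
    #{p ∈ X | s(p.1, p.2) = e} ≤ 2 := by
  induction e using Sym2.ind with | h a b => ?_
  refine (card_le_card fun p hp => ?_).trans (card_le_two (a := (a, b)) (b := (b, a)))
  simp only [mem_filter, Sym2.eq_iff] at hp
  rcases hp.2 with ⟨h₁, h₂⟩ | ⟨h₁, h₂⟩ <;> simp [Prod.ext_iff, h₁, h₂]

end Sym2

namespace SimpleGraph

variable {V : Type*}

def IsCliqueExcept (G : SimpleGraph V) (s : Set V) (e : Sym2 V) : Prop :=
  s.Pairwise fun x y => s(x, y) ≠ e → G.Adj x y

theorem IsCliqueExcept.mk_eq_of_not_adj {G : SimpleGraph V} {s : Set V} {e : Sym2 V}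
    (h : G.IsCliqueExcept s e) {x y : V} (hx : x ∈ s) (hy : y ∈ s) (hxy : x ≠ y)
    (hadj : ¬G.Adj x y) : s(x, y) = e :=
  not_imp_comm.1 (h hx hy hxy) hadj

section TwoAlmostCliques

variable [DecidableEq V] {G : SimpleGraph V} [DecidableRel G.Adj] {T₁ T₂ : Finset V}
  {e₁ e₂ : Sym2 V} {q : ℕ}

theorem mul_card_sdiff_le_card_nonAdj (hT₁ : #T₁ = q + 1)
    (hΔ : ∀ x ∈ T₁ ∩ T₂, #{y ∈ T₁ ∪ T₂ | G.Adj x y} ≤ q) :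
    #(T₁ ∩ T₂) * #(T₂ \ T₁) ≤
      #{p ∈ (T₁ ∩ T₂) ×ˢ (T₁ ∪ T₂) | p.1 ≠ p.2 ∧ ¬G.Adj p.1 p.2} := by
  rw [card_filter, sum_product, ← smul_eq_mul]
  refine card_nsmul_le_sum _ _ _ fun x hx => ?_
  rw [← card_filter]
  dsimp only
  have hU : #(T₁ ∪ T₂) = q + 1 + #(T₂ \ T₁) := by
    rw [union_comm, ← card_sdiff_add_card, hT₁, add_comm]
  have hsplit := card_filter_add_card_filter_not (s := T₁ ∪ T₂) (fun y => x ≠ y ∧ ¬G.Adj x y)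
  have hrest : #{y ∈ T₁ ∪ T₂ | ¬(x ≠ y ∧ ¬G.Adj x y)} ≤ q + 1 :=
    calc _ ≤ #(insert x {y ∈ T₁ ∪ T₂ | G.Adj x y}) :=
          card_le_card fun y hy => by simp only [mem_filter, mem_insert] at hy ⊢; tauto
      _ ≤ q + 1 := (card_insert_le _ _).trans (Nat.add_le_add_right (hΔ x hx) 1)
  omega

theorem card_nonAdj_le_two (hT₁ : G.IsCliqueExcept T₁ e₁) (hT₂ : G.IsCliqueExcept T₂ e₂) :
    #{p ∈ (T₁ ∩ T₂) ×ˢ (T₁ ∪ T₂) | p.1 ≠ p.2 ∧ ¬G.Adj p.1 p.2} ≤ 2 := by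
  have key : ∀ x ∈ T₁ ∩ T₂, ∀ y, x ≠ y → ¬G.Adj x y →
      (y ∈ T₁ → s(x, y) = e₁) ∧ (y ∈ T₂ → s(x, y) = e₂) := fun x hx y hxy hadj =>
    ⟨fun hy => hT₁.mk_eq_of_not_adj (mem_inter.1 hx).1 hy hxy hadj,
      fun hy => hT₂.mk_eq_of_not_adj (mem_inter.1 hx).2 hy hxy hadj⟩
  rcases eq_or_ne e₁ e₂ with rfl | he
  · refine (card_le_card fun p hp => ?_).trans
      (card_filter_mk_eq_le_two ((T₁ ∩ T₂) ×ˢ (T₁ ∪ T₂)) e₁)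
    simp only [mem_filter, mem_product, mem_union] at hp ⊢
    have := key p.1 hp.1.1 p.2 hp.2.1 hp.2.2
    exact ⟨hp.1, hp.1.2.elim this.1 this.2⟩
  -- a non-adjacent pair inside `T₁ ∩ T₂` would be both missing edges, so every pair leaves
  -- the intersection, and a given missing edge does so in at most one ordered way
  · have hdisj : ∀ {A B : Finset V}, Disjoint (A ∩ B) (A \ B) := fun {A B} =>
      Finset.disjoint_left.2 fun x hx hx' => (mem_sdiff.1 hx').2 (mem_inter.1 hx).2
    calc _ ≤ #({p ∈ (T₁ ∩ T₂) ×ˢ (T₁ \ T₂) | s(p.1, p.2) = e₁} ∪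
            {p ∈ (T₁ ∩ T₂) ×ˢ (T₂ \ T₁) | s(p.1, p.2) = e₂}) := card_le_card fun p hp => by
          simp only [mem_filter, mem_product, mem_union, mem_sdiff] at hp ⊢
          have := key p.1 hp.1.1 p.2 hp.2.1 hp.2.2
          by_cases h₁ : p.2 ∈ T₁ <;> by_cases h₂ : p.2 ∈ T₂ <;> simp_all
      _ ≤ 1 + 1 := (card_union_le _ _).trans (add_le_add (card_filter_mk_eq_le_one hdisj _)
          (card_filter_mk_eq_le_one (inter_comm T₁ T₂ ▸ hdisj) _))

theorem eq_of_isCliqueExcept_of_inter_nonempty (hq : 3 ≤ q) (hc₁ : #T₁ = q + 1)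
    (hc₂ : #T₂ = q + 1) (hT₁ : G.IsCliqueExcept T₁ e₁) (hT₂ : G.IsCliqueExcept T₂ e₂)
    (hΔ : ∀ x ∈ T₁ ∩ T₂, #{y ∈ T₁ ∪ T₂ | G.Adj x y} ≤ q) (hI : (T₁ ∩ T₂).Nonempty) :
    T₁ = T₂ := by
  by_contra hne
  have hk : (T₂ \ T₁).Nonempty :=
    sdiff_nonempty.2 fun h => hne (eq_of_subset_of_card_le h (by omega)).symm
  have hmk : #(T₁ ∩ T₂) + #(T₂ \ T₁) = q + 1 := by
    rw [inter_comm, card_inter_add_card_sdiff, hc₂]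
  have := (mul_card_sdiff_le_card_nonAdj hc₁ hΔ).trans (card_nonAdj_le_two hT₁ hT₂)
  have := hI.card_pos
  have := hk.card_pos
  nlinarith

end TwoAlmostCliques

theorem Subgraph.exists_finset_of_iso_KsubE [Fintype V] {G : SimpleGraph V} {n : ℕ}
    (C : G.Subgraph) (φ : C.coe ≃g KsubE (n + 1)) :
    ∃ (T : Finset V) (e : Sym2 V), (T : Set V) = C.verts ∧ #T = n + 1 ∧
      ∀ x y, C.Adj x y ↔ x ∈ T ∧ y ∈ T ∧ x ≠ y ∧ s(x, y) ≠ e := by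
  classical
  have hf : Function.Injective (Subtype.val ∘ φ.symm) :=
    Subtype.val_injective.comp φ.symm.injective
  refine ⟨C.verts.toFinset, Sym2.map (Subtype.val ∘ φ.symm) s(0, 1), Set.coe_toFinset _, ?_,
    fun x y => ?_⟩
  · rw [Set.toFinset_card, Fintype.card_congr φ.toEquiv, Fintype.card_fin]
  have key : ∀ (hx : x ∈ C.verts) (hy : y ∈ C.verts),
      C.Adj x y ↔ x ≠ y ∧ s(x, y) ≠ Sym2.map (Subtype.val ∘ φ.symm) s(0, 1) := fun hx hy => by
    have hmk : s(x, y) = Sym2.map (Subtype.val ∘ φ.symm) s(φ ⟨x, hx⟩, φ ⟨y, hy⟩) := by simp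
    have hne : x ≠ y ↔ φ ⟨x, hx⟩ ≠ φ ⟨y, hy⟩ := by simp [φ.injective.ne_iff]
    rw [hmk, (Sym2.map.injective hf).ne_iff, hne, ← KsubE_adj_iff, φ.map_adj_iff]
    rfl
  simp only [Set.mem_toFinset]
  exact ⟨fun h => have hx := C.edge_vert h; have hy := C.edge_vert h.symm; ⟨hx, hy, (key hx hy).1 h⟩,
    fun ⟨hx, hy, h⟩ => (key hx hy).2 h⟩

theorem Subgraph.isCliqueExcept_of_adj_iff {G : SimpleGraph V} {C : G.Subgraph} {T : Finset V}
    {e : Sym2 V} (h : ∀ x y, C.Adj x y ↔ x ∈ T ∧ y ∈ T ∧ x ≠ y ∧ s(x, y) ≠ e) :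
    G.IsCliqueExcept T e :=
  fun x hx y hy hxy he => ((h x y).2 ⟨hx, hy, hxy, he⟩).adj_sub

theorem minDegree_le_card_filter_adj_of_maximal [DecidableEq V] {H : SimpleGraph V}
    {β : Type*} [Fintype β] {R : SimpleGraph β} [DecidableRel R.Adj] {S : Finset V}
    (hSfree : ¬ Contains (H.induce (S : Set V)) R)
    (hSmax : ∀ W : Finset V, ¬ Contains (H.induce (W : Set V)) R → W.card ≤ S.card)
    {x : V} (hx : x ∉ S) [DecidablePred (H.Adj x)] :
    R.minDegree ≤ #{y ∈ S | H.Adj x y} := by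
  obtain ⟨f, hf⟩ : Contains (H.induce (insert x S : Finset V)) R := by
    by_contra h
    have := hSmax _ h
    rw [card_insert_of_notMem hx] at this
    omega
  have hmem : ∀ b, (f b : V) ∈ insert x S := fun b => mem_coe.1 (f b).2
  by_cases hb : ∃ b, (f b : V) = x
  · obtain ⟨b, hbx⟩ := hb
    calc R.minDegree ≤ #(R.neighborFinset b) := by
          rw [card_neighborFinset_eq_degree]; exact R.minDegree_le_degree b
      _ ≤ #{y ∈ S | H.Adj x y} := by
          refine card_le_card_of_injOn (fun c => (f c : V)) (fun c hc => ?_)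
            (fun c _ c' _ h => hf (Subtype.ext h))
          have hadj : H.Adj x (f c) :=
            hbx.subst (motive := (H.Adj · (f c))) (f.map_adj ((mem_neighborFinset _ _ _).1 hc))
          rw [mem_coe, mem_filter]
          refine ⟨?_, hadj⟩
          exact (mem_insert.1 (hmem c)).resolve_left hadj.ne'
  · push Not at hb
    refine absurd ⟨⟨fun b => ⟨f b, ?_⟩, fun h => f.map_adj h⟩,
      fun b c h => hf (Subtype.ext (Subtype.mk.inj h))⟩ hSfree
    exact (mem_insert.1 (hmem b)).resolve_left (hb b)

theorem card_filter_notMem_add_minDegree_le_maxDegree [Fintype V] [DecidableEq V]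
    {H : SimpleGraph V} [DecidableRel H.Adj]
    {β : Type*} [Fintype β] {R : SimpleGraph β} [DecidableRel R.Adj] {S : Finset V}
    (hSfree : ¬ Contains (H.induce (S : Set V)) R)
    (hSmax : ∀ W : Finset V, ¬ Contains (H.induce (W : Set V)) R → W.card ≤ S.card)
    {x : V} (hx : x ∉ S) :
    #{y ∈ H.neighborFinset x | y ∉ S} + R.minDegree ≤ H.maxDegree := by
  have hS : {y ∈ H.neighborFinset x | y ∈ S} = {y ∈ S | H.Adj x y} := by
    ext y; simp [and_comm]
  have hsplit := card_filter_add_card_filter_not (s := H.neighborFinset x) (· ∈ S)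
  rw [hS, card_neighborFinset_eq_degree] at hsplit
  have := minDegree_le_card_filter_adj_of_maximal hSfree hSmax hx
  have := H.degree_le_maxDegree x
  omega

theorem ConnectedComponent.supp_eq_of_isClique {W : Type*} {F : SimpleGraph W} {A : Set W}
    {v : W} (hv : v ∈ A) (hA : F.IsClique A) (hclosed : ∀ x ∈ A, ∀ y, F.Adj x y → y ∈ A) :
    (F.connectedComponentMk v).supp = A := by
  ext x
  rw [ConnectedComponent.mem_supp_iff, ConnectedComponent.eq]
  refine ⟨fun h => ?_, fun hx => ?_⟩
  · exact h.symm.mem_subgraphVerts (H := (⊤ : F.Subgraph).induce A)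
      (fun y hy z hyz => ⟨hy, hclosed y hy z hyz, hyz⟩) hv
  · obtain rfl | hxv := eq_or_ne x v
    · rfl
    · exact (hA hx hv hxv).reachable

theorem mem_of_adj_of_isClique [Fintype V] [DecidableEq V] {H : SimpleGraph V} [DecidableRel H.Adj]
    {S T : Finset V} {q : ℕ} (hT : H.IsClique (T : Set V)) (hcard : #T = q + 1)
    {x y : V} (hx : x ∈ T) (hxS : ∀ z ∈ T, z ∉ S) (hΔ : #{z ∈ H.neighborFinset x | z ∉ S} ≤ q)
    (hxy : H.Adj x y) (hy : y ∉ S) : y ∈ T := by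
  have hsub : T.erase x ⊆ {z ∈ H.neighborFinset x | z ∉ S} := fun z hz => by
    rw [mem_erase] at hz
    simp only [mem_filter, mem_neighborFinset]
    exact ⟨hT hx hz.2 hz.1.symm, hxS z hz.2⟩
  have heq := eq_of_subset_of_card_le hsub (by rw [card_erase_of_mem hx]; omega)
  exact mem_of_mem_erase (heq ▸ (by simpa using ⟨hxy, hy⟩) : y ∈ T.erase x)

theorem connectedComponentMk_induce_compl_of_isClique [Fintype V] [DecidableEq V]
    {H : SimpleGraph V} [DecidableRel H.Adj] {S T : Finset V} {q : ℕ}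
    (hΔ : ∀ x ∉ S, #{y ∈ H.neighborFinset x | y ∉ S} ≤ q) (hT : H.IsClique (T : Set V))
    (hTS : ∀ z ∈ T, z ∉ S) (hcard : #T = q + 1) {v : V} (hvT : v ∈ T) (hv : v ∈ (S : Set V)ᶜ) :
    ((H.induce (S : Set V)ᶜ).connectedComponentMk ⟨v, hv⟩).supp.ncard = q + 1 ∧
      ∀ x ∈ ((H.induce (S : Set V)ᶜ).connectedComponentMk ⟨v, hv⟩).supp,
      ∀ y ∈ ((H.induce (S : Set V)ᶜ).connectedComponentMk ⟨v, hv⟩).supp,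
        x ≠ y → (H.induce (S : Set V)ᶜ).Adj x y := by
  have hclique : (H.induce (S : Set V)ᶜ).IsClique (Subtype.val ⁻¹' (T : Set V)) :=
    fun x hx y hy hxy => hT hx hy (Subtype.val_injective.ne hxy)
  have hsupp := ConnectedComponent.supp_eq_of_isClique (v := ⟨v, hv⟩) hvT hclique
    fun x hx y hxy => mem_of_adj_of_isClique hT hcard hx hTS (hΔ x (hTS x hx)) hxy y.2
  rw [hsupp]
  refine ⟨?_, hclique⟩
  calc _ = (T : Set V).ncard := Set.ncard_preimage_of_injective_subset_range Subtype.val_injective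
          fun z hz => ⟨⟨z, hTS z hz⟩, rfl⟩
    _ = q + 1 := (Set.ncard_coe_finset T).trans hcard

end SimpleGraph

theorem statement4 {V : Type} [Fintype V] [DecidableEq V]
    (H : SimpleGraph V) [DecidableRel H.Adj]
    (d : ℕ) (hd : H.maxDegree = d)
    (p q : ℕ) (hq : 3 ≤ q) (hpq : p + q = d + 1)
    {β : Type} [Fintype β] (R : SimpleGraph β) [DecidableRel R.Adj]
    (hδR : p - 1 ≤ R.minDegree)
    (S : Finset V)
    (hSfree : ¬ Contains (H.induce (S : Set V)) R)
    (hSmax : ∀ W : Finset V, ¬ Contains (H.induce (W : Set V)) R → W.card ≤ S.card)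
    (v : V) (hv : v ∉ S) :
    -- either `v` lies in at most one copy of `G = K_{q+1} ∖ e` in `H[V ∖ S]` ...
    (∀ C₁ C₂ : H.Subgraph,
      C₁.verts ⊆ (↑S : Set V)ᶜ → C₂.verts ⊆ (↑S : Set V)ᶜ →
      Nonempty (C₁.coe ≃g KsubE (q + 1)) → Nonempty (C₂.coe ≃g KsubE (q + 1)) →
      v ∈ C₁.verts → v ∈ C₂.verts → C₁ = C₂) ∨
    -- ... or `v` lies in a copy of `K_{q+1}` forming a connected component of `H[V ∖ S]`,
    -- i.e. the connected component of `v` in `H[V ∖ S]` has `q+1` vertices,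
    -- pairwise adjacent
    (((H.induce ((↑S : Set V)ᶜ)).connectedComponentMk
        ⟨v, by simpa using hv⟩).supp.ncard = q + 1 ∧
      ∀ x ∈ ((H.induce ((↑S : Set V)ᶜ)).connectedComponentMk
          ⟨v, by simpa using hv⟩).supp,
        ∀ y ∈ ((H.induce ((↑S : Set V)ᶜ)).connectedComponentMk
          ⟨v, by simpa using hv⟩).supp,
        x ≠ y → (H.induce ((↑S : Set V)ᶜ)).Adj x y) := by
  have hΔ : ∀ x ∉ S, #{y ∈ H.neighborFinset x | y ∉ S} ≤ q := fun x hx => by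
    have := card_filter_notMem_add_minDegree_le_maxDegree hSfree hSmax hx
    omega
  refine or_iff_not_imp_left.2 fun h => ?_
  push Not at h
  obtain ⟨C₁, C₂, hC₁S, hC₂S, ⟨φ₁⟩, ⟨φ₂⟩, hv₁, hv₂, hne⟩ := h
  obtain ⟨T₁, e₁, hT₁, hc₁, hadj₁⟩ := C₁.exists_finset_of_iso_KsubE φ₁
  obtain ⟨T₂, e₂, hT₂, hc₂, hadj₂⟩ := C₂.exists_finset_of_iso_KsubE φ₂
  have hvT₁ : v ∈ T₁ := mem_coe.1 (hT₁.symm ▸ hv₁)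
  have hT₁S : ∀ z ∈ T₁, z ∉ S := fun z hz => hC₁S (hT₁ ▸ hz)
  have hT₂S : ∀ z ∈ T₂, z ∉ S := fun z hz => hC₂S (hT₂ ▸ hz)
  have hΔ₁₂ : ∀ x ∈ T₁ ∩ T₂, #{y ∈ T₁ ∪ T₂ | H.Adj x y} ≤ q := fun x hx => by
    refine (card_le_card fun y hy => ?_).trans (hΔ x (hT₁S x (mem_inter.1 hx).1))
    simp only [mem_filter, mem_union, mem_neighborFinset] at hy ⊢
    exact ⟨hy.2, hy.1.elim (hT₁S y) (hT₂S y)⟩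
  have hK₁ := Subgraph.isCliqueExcept_of_adj_iff hadj₁
  have hK₂ := Subgraph.isCliqueExcept_of_adj_iff hadj₂
  obtain rfl : T₁ = T₂ := eq_of_isCliqueExcept_of_inter_nonempty hq hc₁ hc₂ hK₁ hK₂ hΔ₁₂
    ⟨v, mem_inter.2 ⟨hvT₁, mem_coe.1 (hT₂.symm ▸ hv₂)⟩⟩
  have he : e₁ ≠ e₂ := fun he =>
    hne (Subgraph.ext (hT₁.symm.trans hT₂) (by ext x y; rw [hadj₁, hadj₂, he]))
  have hclique : H.IsClique (T₁ : Set V) := fun x hx y hy hxy => by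
    by_cases hxy₁ : s(x, y) = e₁
    · exact hK₂ hx hy hxy (hxy₁ ▸ he)
    · exact hK₁ hx hy hxy hxy₁
  exact connectedComponentMk_induce_compl_of_isClique hΔ hclique hT₁S hc₁ hvT₁ _
end

section
/- Let H be a finite connected simple graph with maximum degree Δ(H) = d ≥ 6 and clique number ω(H) = d − 1. Then there exists a partition of V(H) into two sets V₁ and V₂ such that H[V₁] contains no clique of size d − 1 and H[V₂] contains no triangle (no clique of size 3). -/
/-!
Take `P` with no `(d - 1)`-clique of maximum size and, among those, with the fewest triangles in
its complement, and suppose a vertex `a ∉ P` lies in a triangle `abc` of the complement. By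
maximality every vertex outside `P` sees a `(d - 2)`-clique in `P`, so the degree bound leaves `a`
exactly a clique `C ⊆ P` and `b, c`. Swapping `a` with any `x ∈ C` gives another optimal set; by
minimality `x` then has exactly three neighbours outside `P`: `a` and two adjacent vertices, each
of which is a triangle vertex for the swapped set. Repeating the swap along edges, connectivity
gives every vertex this rigid shape: `P` splits into closed `(d - 2)`-cliques, each vertex outside
`P` dominates one of them and has at most one other neighbour in `P`, and each vertex of `P` has
two outside neighbours not dominating its clique. Double counting then gives
`#Pᶜ * (d - 2) ≤ #P` and `2 * #P ≤ #Pᶜ`, so `Pᶜ` is empty, contradicting the triangle.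
-/

open Finset

lemma Finset.card_insert_erase {α : Type*} [DecidableEq α] {s : Finset α} {a x : α} (ha : a ∉ s)
    (hx : x ∈ s) : #(insert a (s.erase x)) = #s := by
  rw [card_insert_of_notMem (fun h => ha (mem_of_mem_erase h)), card_erase_add_one hx]

namespace SimpleGraph

lemma Preconnected.forall_of_adj {V : Type*} {G : SimpleGraph V} {p : V → Prop}
    (hG : G.Preconnected) (h : ∀ v w, G.Adj v w → p v → p w) {u : V} (hu : p u) (v : V) : p v := by
  obtain ⟨w⟩ := hG u v
  induction w with
  | nil => exact hu
  | cons hadj _ ih => exact ih (h _ _ hadj hu)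

variable {V : Type*} [Fintype V] [DecidableEq V] (G : SimpleGraph V) [DecidableRel G.Adj]

def nbrIn (A : Finset V) (v : V) : Finset V := G.neighborFinset v ∩ A

def nbrOut (A : Finset V) (v : V) : Finset V := G.neighborFinset v \ A

def triangleCount (B : Finset V) : ℕ := #{t ∈ G.cliqueFinset 3 | t ⊆ B}

def trianglesAt (z : V) (B : Finset V) : ℕ := #{t ∈ G.cliqueFinset 3 | t ⊆ B ∧ z ∈ t}

variable {G} {A B : Finset V} {v y z : V}

@[simp]
lemma mem_nbrIn : y ∈ G.nbrIn A v ↔ G.Adj v y ∧ y ∈ A := by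
  simp [nbrIn]

@[simp]
lemma mem_nbrOut : y ∈ G.nbrOut A v ↔ G.Adj v y ∧ y ∉ A := by
  simp [nbrOut]

lemma nbrIn_subset : G.nbrIn A v ⊆ A := inter_subset_right

lemma card_nbrIn_add_card_nbrOut (A : Finset V) (v : V) :
    #(G.nbrIn A v) + #(G.nbrOut A v) = G.degree v := by
  rw [← card_neighborFinset_eq_degree, add_comm, nbrIn, nbrOut, card_sdiff_add_card_inter]

lemma mem_nbrIn_or_mem_nbrOut (A : Finset V) (h : G.Adj v y) :
    y ∈ G.nbrIn A v ∨ y ∈ G.nbrOut A v := by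
  by_cases hy : y ∈ A <;> simp [h, hy]

lemma nbrIn_congr (h : ∀ y, G.Adj v y → (y ∈ A ↔ y ∈ B)) : G.nbrIn A v = G.nbrIn B v := by
  ext y
  simp only [mem_nbrIn]
  exact ⟨fun ⟨hy, hyA⟩ => ⟨hy, (h y hy).1 hyA⟩, fun ⟨hy, hyB⟩ => ⟨hy, (h y hy).2 hyB⟩⟩

lemma nbrOut_congr (h : ∀ y, G.Adj v y → (y ∈ A ↔ y ∈ B)) : G.nbrOut A v = G.nbrOut B v := by
  ext y
  simp only [mem_nbrOut]
  exact ⟨fun ⟨hy, hyA⟩ => ⟨hy, mt (h y hy).2 hyA⟩, fun ⟨hy, hyB⟩ => ⟨hy, mt (h y hy).1 hyB⟩⟩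

lemma nbrIn_compl : G.nbrIn Aᶜ v = G.nbrOut A v := by
  ext y; simp

lemma nbrOut_insert_erase (A : Finset V) (a x : V) :
    G.nbrOut (insert a (A.erase x)) x = (G.nbrOut A x).erase a := by
  ext y
  simp only [mem_nbrOut, mem_erase, mem_insert]
  constructor
  · rintro ⟨hxy, hy⟩
    exact ⟨fun h => hy (Or.inl h), hxy, fun h => hy (Or.inr ⟨hxy.ne.symm, h⟩)⟩
  · rintro ⟨hya, hxy, hyA⟩
    exact ⟨hxy, by rintro (h | ⟨-, h⟩) <;> contradiction⟩

lemma IsClique.erase_subset_nbrIn {t : Finset V} (ht : G.IsClique (t : Set V)) (hz : z ∈ t)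
    (htA : t.erase z ⊆ A) : t.erase z ⊆ G.nbrIn A z := fun _ hy =>
  mem_nbrIn.2 ⟨ht (mem_coe.2 hz) (mem_coe.2 (mem_of_mem_erase hy)) (ne_of_mem_erase hy).symm,
    htA hy⟩

lemma triangleCount_eq_erase_add (z : V) (B : Finset V) :
    G.triangleCount B = G.triangleCount (B.erase z) + G.trianglesAt z B := by
  rw [triangleCount, triangleCount, trianglesAt, add_comm,
    ← card_filter_add_card_filter_not (s := {t ∈ G.cliqueFinset 3 | t ⊆ B}) (z ∈ ·)]
  simp only [filter_filter, subset_erase]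

lemma trianglesAt_le_one (h : #(G.nbrIn B z) ≤ 2) : G.trianglesAt z B ≤ 1 := by
  have hunique : ∀ t ∈ ({t ∈ G.cliqueFinset 3 | t ⊆ B ∧ z ∈ t} : Finset _),
      t = insert z (G.nbrIn B z) := by
    intro t ht
    obtain ⟨htc, htB, hzt⟩ := mem_filter.1 ht
    rw [mem_cliqueFinset_iff] at htc
    have hsub := htc.isClique.erase_subset_nbrIn hzt ((erase_subset z t).trans htB)
    have hcard : #(t.erase z) = 2 := by rw [card_erase_of_mem hzt, htc.card_eq]
    rw [← eq_of_subset_of_card_le hsub (by omega), insert_erase hzt]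
  exact card_le_one.2 fun t ht t' ht' => (hunique t ht).trans (hunique t' ht').symm

lemma trianglesAt_pos {b c : V} (hz : z ∈ B) (hb : b ∈ G.nbrIn B z) (hc : c ∈ G.nbrIn B z)
    (hbc : G.Adj b c) : 0 < G.trianglesAt z B := by
  rw [mem_nbrIn] at hb hc
  refine card_pos.2 ⟨{z, b, c}, ?_⟩
  simp only [mem_filter, mem_cliqueFinset_iff, is3Clique_triple_iff, mem_insert, mem_singleton,
    true_or, and_true, insert_subset_iff, singleton_subset_iff]
  exact ⟨⟨hb.1, hc.1, hbc⟩, hz, hb.2, hc.2⟩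

lemma exists_adj_of_trianglesAt_pos (h : 0 < G.trianglesAt z B) :
    ∃ r ∈ G.nbrIn B z, ∃ s ∈ G.nbrIn B z, G.Adj r s := by
  obtain ⟨t, ht⟩ := card_pos.1 h
  obtain ⟨htc, htB, hzt⟩ := mem_filter.1 ht
  rw [mem_cliqueFinset_iff] at htc
  obtain ⟨r, s, hrs, hs⟩ := card_eq_two.1 (htc.erase_of_mem hzt).card_eq
  have hsub := htc.isClique.erase_subset_nbrIn hzt ((erase_subset z t).trans htB)
  have hcl := (htc.erase_of_mem hzt).isClique
  rw [hs] at hsub hcl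
  exact ⟨r, hsub (by simp), s, hsub (by simp), hcl (by simp) (by simp) hrs⟩

structure IsOptimal (k : ℕ) (A : Finset V) : Prop where
  cliqueFreeOn : G.CliqueFreeOn A k
  card_le : ∀ B : Finset V, G.CliqueFreeOn B k → #B ≤ #A
  triangleCount_le : ∀ B : Finset V, G.CliqueFreeOn B k → #B = #A →
    G.triangleCount Aᶜ ≤ G.triangleCount Bᶜ

lemma exists_isOptimal {k : ℕ} (hk : k ≠ 0) : ∃ A, G.IsOptimal k A := by
  classical
  obtain ⟨M, hM, hMmax⟩ := exists_max_image {A : Finset V | G.CliqueFreeOn A k} card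
    ⟨∅, by simpa using hk⟩
  obtain ⟨A, hA, hAmin⟩ := exists_min_image {A : Finset V | G.CliqueFreeOn A k ∧ #A = #M}
    (fun A => G.triangleCount Aᶜ) ⟨M, by simpa using hM⟩
  simp only [mem_filter, mem_univ, true_and] at hM hMmax hA hAmin
  refine ⟨A, hA.1, fun B hB => hA.2 ▸ hMmax B hB, fun B hB hBA => hAmin B ⟨hB, hBA.trans hA.2⟩⟩

lemma cliqueFreeOn_insert {k : ℕ} {p : V} (hA : G.CliqueFreeOn A k)
    (hp : G.CliqueFreeOn (G.nbrIn A p) (k - 1)) : G.CliqueFreeOn (insert p A : Finset V) k := by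
  intro t ht hcl
  rw [coe_subset] at ht
  by_cases hpt : p ∈ t
  · refine hp (coe_subset.2 (hcl.isClique.erase_subset_nbrIn hpt fun y hy => ?_))
      (hcl.erase_of_mem hpt)
    exact (mem_insert.1 (ht (mem_of_mem_erase hy))).resolve_left (ne_of_mem_erase hy)
  · exact hA (coe_subset.2 fun y hy => (mem_insert.1 (ht hy)).resolve_left
      (fun h => hpt (h ▸ hy))) hcl

def InComplTriangle (A : Finset V) (a : V) : Prop :=
  a ∉ A ∧ ∃ b ∈ G.nbrOut A a, ∃ c ∈ G.nbrOut A a, G.Adj b c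

structure IsClosedClass (d : ℕ) (A C : Finset V) : Prop where
  subset : C ⊆ A
  isNClique : G.IsNClique (d - 2) C
  nbrIn_eq : ∀ y ∈ C, G.nbrIn A y = C.erase y

variable {d : ℕ} {C D : Finset V} {a b c p x : V}

lemma IsClosedClass.eq_of_isNClique (hD : G.IsClosedClass d A D) (hC : G.IsNClique (d - 2) C)
    (hCA : C ⊆ A) (hyC : y ∈ C) (hyD : y ∈ D) : C = D := by
  have hsub : C.erase y ⊆ D.erase y := by
    rw [← hD.nbrIn_eq y hyD]
    exact hC.isClique.erase_subset_nbrIn hyC ((erase_subset y C).trans hCA)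
  have hcard : #(D.erase y) ≤ #(C.erase y) := by
    rw [card_erase_of_mem hyC, card_erase_of_mem hyD, hC.card_eq, hD.isNClique.card_eq]
  rw [← insert_erase hyC, ← insert_erase hyD, eq_of_subset_of_card_le hsub hcard]

lemma IsClosedClass.eq_of_mem (hC : G.IsClosedClass d A C) (hD : G.IsClosedClass d A D)
    (hyC : y ∈ C) (hyD : y ∈ D) : C = D :=
  hD.eq_of_isNClique hC.isNClique hC.subset hyC hyD

lemma IsOptimal.exists_isNClique_subset_nbrIn (hA : G.IsOptimal (d - 1) A) (hp : p ∉ A) :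
    ∃ C ⊆ G.nbrIn A p, G.IsNClique (d - 2) C := by
  by_contra! h
  have hfree : G.CliqueFreeOn (insert p A : Finset V) (d - 1) :=
    cliqueFreeOn_insert hA.cliqueFreeOn fun t ht hcl =>
      h t (coe_subset.1 ht) (by rwa [Nat.sub_sub] at hcl)
  have := hA.card_le _ hfree
  rw [card_insert_of_notMem hp] at this
  omega

lemma IsOptimal.isNClique_nbrIn_and_nbrOut_eq (hdeg : ∀ v, G.degree v ≤ d)
    (hA : G.IsOptimal (d - 1) A) (ha : a ∉ A) (hb : b ∈ G.nbrOut A a) (hc : c ∈ G.nbrOut A a)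
    (hbc : b ≠ c) : G.IsNClique (d - 2) (G.nbrIn A a) ∧ G.nbrOut A a = {b, c} := by
  obtain ⟨C, hCsub, hC⟩ := hA.exists_isNClique_subset_nbrIn ha
  have hbcsub : {b, c} ⊆ G.nbrOut A a := insert_subset hb (singleton_subset_iff.2 hc)
  have h1 := card_le_card hCsub
  have h2 := card_le_card hbcsub
  have hsum := card_nbrIn_add_card_nbrOut (G := G) A a
  have hCc := hC.card_eq
  have hbcc := card_pair hbc
  have := hdeg a
  rw [← eq_of_subset_of_card_le hCsub (by omega), eq_of_subset_of_card_le hbcsub (by omega)]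
  exact ⟨hC, rfl⟩

lemma InComplTriangle.isNClique_nbrIn (hdeg : ∀ v, G.degree v ≤ d) (hA : G.IsOptimal (d - 1) A)
    (ha : G.InComplTriangle A a) : G.IsNClique (d - 2) (G.nbrIn A a) := by
  obtain ⟨ha, b, hb, c, hc, hbc⟩ := ha
  exact (hA.isNClique_nbrIn_and_nbrOut_eq hdeg ha hb hc hbc.ne).1

lemma InComplTriangle.exists_nbrOut_eq (hdeg : ∀ v, G.degree v ≤ d) (hA : G.IsOptimal (d - 1) A)
    (ha : G.InComplTriangle A a) : ∃ b c, G.nbrOut A a = {b, c} ∧ G.Adj b c := by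
  obtain ⟨ha, b, hb, c, hc, hbc⟩ := ha
  exact ⟨b, c, (hA.isNClique_nbrIn_and_nbrOut_eq hdeg ha hb hc hbc.ne).2, hbc⟩

lemma InComplTriangle.of_mem_nbrOut (hdeg : ∀ v, G.degree v ≤ d) (hA : G.IsOptimal (d - 1) A)
    (ha : G.InComplTriangle A a) (hz : z ∈ G.nbrOut A a) : G.InComplTriangle A z := by
  obtain ⟨b, c, hbc, hadj⟩ := ha.exists_nbrOut_eq hdeg hA
  have hb : b ∈ G.nbrOut A a := by simp [hbc]
  have hc : c ∈ G.nbrOut A a := by simp [hbc]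
  rw [mem_nbrOut] at hb hc
  have haz : a ∈ G.nbrOut A z := mem_nbrOut.2 ⟨(mem_nbrOut.1 hz).1.symm, ha.1⟩
  rw [hbc, mem_insert, mem_singleton] at hz
  rcases hz with rfl | rfl
  · exact ⟨hb.2, a, haz, c, mem_nbrOut.2 ⟨hadj, hc.2⟩, hc.1⟩
  · exact ⟨hc.2, a, haz, b, mem_nbrOut.2 ⟨hadj.symm, hb.2⟩, hb.1⟩

lemma CliqueFreeOn.insert_erase (hd : 3 ≤ d) (hA : G.CliqueFreeOn A (d - 1))
    (ha : G.IsNClique (d - 2) (G.nbrIn A a)) (hx : x ∈ G.nbrIn A a) :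
    G.CliqueFreeOn (insert a (A.erase x) : Finset V) (d - 1) := by
  refine cliqueFreeOn_insert (fun t ht => hA (ht.trans (coe_subset.2 (erase_subset x A))))
    (G.cliqueFreeOn_of_card_lt ?_)
  have : G.nbrIn (A.erase x) a = (G.nbrIn A a).erase x := by
    ext y; simp only [mem_nbrIn, mem_erase]; tauto
  rw [this, card_erase_of_mem hx, ha.card_eq]
  omega

lemma triangleCount_compl_insert_erase (hx : x ∈ A) :
    G.triangleCount (insert a (A.erase x))ᶜ + G.trianglesAt a Aᶜ =
      G.triangleCount Aᶜ + G.trianglesAt x (insert a (A.erase x))ᶜ := by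
  have hset : (insert a (A.erase x))ᶜ.erase x = Aᶜ.erase a := by
    ext y
    simp only [mem_erase, mem_compl, mem_insert]
    constructor
    · rintro ⟨hyx, hy⟩
      exact ⟨fun h => hy (Or.inl h), fun h => hy (Or.inr ⟨hyx, h⟩)⟩
    · rintro ⟨hya, hyA⟩
      exact ⟨fun h => hyA (h ▸ hx), by rintro (h | ⟨-, h⟩) <;> contradiction⟩
  rw [G.triangleCount_eq_erase_add a Aᶜ, G.triangleCount_eq_erase_add x, hset]
  omega

lemma InComplTriangle.trianglesAt_pos (ha : G.InComplTriangle A a) : 0 < G.trianglesAt a Aᶜ := by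
  obtain ⟨ha, b, hb, c, hc, hbc⟩ := ha
  rw [← nbrIn_compl] at hb hc
  exact SimpleGraph.trianglesAt_pos (mem_compl.2 ha) hb hc hbc

lemma IsOptimal.exists_adj_nbrOut_erase (hdeg : ∀ v, G.degree v ≤ d) (hd : 3 ≤ d)
    (hA : G.IsOptimal (d - 1) A) (ha : G.InComplTriangle A a) (hx : x ∈ G.nbrIn A a) :
    ∃ r ∈ (G.nbrOut A x).erase a, ∃ s ∈ (G.nbrOut A x).erase a, G.Adj r s := by
  have hxA : x ∈ A := nbrIn_subset hx
  have hmin := hA.triangleCount_le _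
    (hA.cliqueFreeOn.insert_erase hd (ha.isNClique_nbrIn hdeg hA) hx) (card_insert_erase ha.1 hxA)
  have hpos := ha.trianglesAt_pos
  have hswap := G.triangleCount_compl_insert_erase (a := a) hxA
  -- the swap keeps the size and destroys the triangle `abc`, so minimality forces a new triangle
  -- through `x`
  have hposx : 0 < G.trianglesAt x (insert a (A.erase x))ᶜ := by omega
  simpa only [nbrIn_compl, nbrOut_insert_erase] using exists_adj_of_trianglesAt_pos hposx

lemma InComplTriangle.nbrIn_eq_and_exists_nbrOut_eq (hdeg : ∀ v, G.degree v ≤ d) (hd : 3 ≤ d)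
    (hA : G.IsOptimal (d - 1) A) (ha : G.InComplTriangle A a) (hx : x ∈ G.nbrIn A a) :
    G.nbrIn A x = (G.nbrIn A a).erase x ∧
      ∃ r s, G.nbrOut A x = {a, r, s} ∧ r ≠ a ∧ s ≠ a ∧ G.Adj r s := by
  obtain ⟨r, hr, s, hs, hrs⟩ := hA.exists_adj_nbrOut_erase hdeg hd ha hx
  rw [mem_erase] at hr hs
  have hC := ha.isNClique_nbrIn hdeg hA
  have hsub1 : (G.nbrIn A a).erase x ⊆ G.nbrIn A x :=
    hC.isClique.erase_subset_nbrIn hx ((erase_subset _ _).trans nbrIn_subset)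
  have hsub2 : {a, r, s} ⊆ G.nbrOut A x := by
    refine insert_subset (mem_nbrOut.2 ⟨(mem_nbrIn.1 hx).1.symm, ha.1⟩) ?_
    exact insert_subset hr.2 (singleton_subset_iff.2 hs.2)
  have h1 := card_le_card hsub1
  have h2 := card_le_card hsub2
  have hC1 : #((G.nbrIn A a).erase x) = d - 3 := by
    rw [card_erase_of_mem hx, hC.card_eq]; omega
  have hC2 : #({a, r, s} : Finset V) = 3 := by
    rw [card_insert_of_notMem (by simp [hr.1.symm, hs.1.symm]), card_pair hrs.ne]
  have hsum := card_nbrIn_add_card_nbrOut (G := G) A x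
  have := hdeg x
  refine ⟨(eq_of_subset_of_card_le hsub1 (by omega)).symm, r, s, ?_, hr.1, hs.1, hrs⟩
  exact (eq_of_subset_of_card_le hsub2 (by omega)).symm

lemma InComplTriangle.isClosedClass (hdeg : ∀ v, G.degree v ≤ d) (hd : 3 ≤ d)
    (hA : G.IsOptimal (d - 1) A) (ha : G.InComplTriangle A a) :
    G.IsClosedClass d A (G.nbrIn A a) :=
  ⟨nbrIn_subset, ha.isNClique_nbrIn hdeg hA,
    fun _ hy => (ha.nbrIn_eq_and_exists_nbrOut_eq hdeg hd hA hy).1⟩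

lemma InComplTriangle.isOptimal_insert_erase (hdeg : ∀ v, G.degree v ≤ d) (hd : 3 ≤ d)
    (hA : G.IsOptimal (d - 1) A) (ha : G.InComplTriangle A a) (hx : x ∈ G.nbrIn A a) :
    G.IsOptimal (d - 1) (insert a (A.erase x)) := by
  have hxA : x ∈ A := nbrIn_subset hx
  have hcard := card_insert_erase ha.1 hxA
  obtain ⟨-, r, s, hxo, hra, hsa, -⟩ := ha.nbrIn_eq_and_exists_nbrOut_eq hdeg hd hA hx
  obtain ⟨b, c, ha2, -⟩ := ha.exists_nbrOut_eq hdeg hA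
  have hle_a : G.trianglesAt a Aᶜ ≤ 1 := by
    refine trianglesAt_le_one ?_
    rw [nbrIn_compl, ha2]
    exact card_le_two
  have hle_x : G.trianglesAt x (insert a (A.erase x))ᶜ ≤ 1 := by
    refine trianglesAt_le_one ?_
    rw [nbrIn_compl, nbrOut_insert_erase, hxo, erase_insert (by simp [hra.symm, hsa.symm])]
    exact card_le_two
  -- the swap trades the only triangle through `a` for the only triangle through `x`
  have hswap := G.triangleCount_compl_insert_erase (a := a) hxA
  have hpos := ha.trianglesAt_pos
  refine ⟨hA.cliqueFreeOn.insert_erase hd (ha.isNClique_nbrIn hdeg hA) hx,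
    fun B hB => hcard ▸ hA.card_le B hB, fun B hB hBc => ?_⟩
  have := hA.triangleCount_le B hB (hBc.trans hcard)
  omega

lemma nbrIn_insert_erase_of_not_adj (h : ¬ G.Adj v a) :
    G.nbrIn (insert a (A.erase x)) v = (G.nbrIn A v).erase x := by
  ext y
  simp only [mem_nbrIn, mem_erase, mem_insert]
  constructor
  · rintro ⟨hvy, rfl | ⟨hyx, hyA⟩⟩
    · exact absurd hvy h
    · exact ⟨hyx, hvy, hyA⟩
  · rintro ⟨hyx, hvy, hyA⟩
    exact ⟨hvy, Or.inr ⟨hyx, hyA⟩⟩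

lemma nbrOut_subset_nbrOut_insert_erase (h : ¬ G.Adj v a) :
    G.nbrOut A v ⊆ G.nbrOut (insert a (A.erase x)) v := by
  intro y hy
  rw [mem_nbrOut] at hy ⊢
  refine ⟨hy.1, fun hy' => ?_⟩
  rcases mem_insert.1 hy' with rfl | hy'
  · exact h hy.1
  · exact hy.2 (mem_of_mem_erase hy')

lemma InComplTriangle.not_adj_of_mem_nbrOut (hdeg : ∀ v, G.degree v ≤ d) (hd : 3 ≤ d)
    (hno : G.CliqueFree d) (hA : G.IsOptimal (d - 1) A) (ha : G.InComplTriangle A a)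
    {t : V} (ht : t ∈ G.nbrIn A a) (hz : z ∈ G.nbrOut A t) : ¬ G.Adj a z := by
  -- otherwise `z` is a triangle vertex too, its class shares `t` with the class of `a`,
  -- and `a`, `z` extend that class to a `d`-clique
  intro haz
  have hz' : z ∈ G.nbrOut A a := mem_nbrOut.2 ⟨haz, (mem_nbrOut.1 hz).2⟩
  have hzt : t ∈ G.nbrIn A z := mem_nbrIn.2 ⟨(mem_nbrOut.1 hz).1.symm, nbrIn_subset ht⟩
  have hCa := ha.isClosedClass hdeg hd hA
  have hCz := (ha.of_mem_nbrOut hdeg hA hz').isClosedClass hdeg hd hA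
  have heq := hCa.eq_of_mem hCz ht hzt
  have hclique := (hCa.isNClique.insert fun y hy => (mem_nbrIn.1 hy).1).insert (a := z) ?_
  · rw [show d - 2 + 1 + 1 = d by omega] at hclique
    exact hno _ hclique
  · intro y hy
    rcases mem_insert.1 hy with rfl | hy
    · exact haz.symm
    · rw [heq] at hy
      exact (mem_nbrIn.1 hy).1

lemma InComplTriangle.exists_partner (hdeg : ∀ v, G.degree v ≤ d) (hd : 3 ≤ d)
    (hA : G.IsOptimal (d - 1) A) (ha : G.InComplTriangle A a) {t : V} (ht : t ∈ G.nbrIn A a)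
    (hz : z ∈ G.nbrOut A t) (hza : z ≠ a) :
    ∃ z' ∈ G.nbrOut A t, z' ≠ a ∧ G.Adj z z' := by
  obtain ⟨-, r, s, hts, hra, hsa, hrs⟩ := ha.nbrIn_eq_and_exists_nbrOut_eq hdeg hd hA ht
  have hr : r ∈ G.nbrOut A t := by simp [hts]
  have hs : s ∈ G.nbrOut A t := by simp [hts]
  rw [hts, mem_insert, mem_insert, mem_singleton] at hz
  rcases hz with rfl | rfl | rfl
  · exact absurd rfl hza
  · exact ⟨s, hs, hsa, hrs⟩
  · exact ⟨r, hr, hra, hrs.symm⟩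

lemma InComplTriangle.nbrOut_insert_erase_eq (hdeg : ∀ v, G.degree v ≤ d) (hd : 3 ≤ d)
    (hA : G.IsOptimal (d - 1) A) (ha : G.InComplTriangle A a) {t z' : V} (ht : t ∈ G.nbrIn A a)
    (hz : z ∈ G.nbrOut A t) (hza : z ≠ a) (hz' : z' ∈ G.nbrOut A t) (hz'a : z' ≠ a)
    (hzz' : G.Adj z z') :
    z ∉ insert a (A.erase t) ∧ G.nbrOut (insert a (A.erase t)) z = {t, z'} := by
  have hta : t ≠ a := fun h => ha.1 (h ▸ nbrIn_subset ht)
  rw [mem_nbrOut] at hz hz'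
  have hzA' : z ∉ insert a (A.erase t) := by simp [hza, hz.2]
  refine ⟨hzA', ((ha.isOptimal_insert_erase hdeg hd hA ht).isNClique_nbrIn_and_nbrOut_eq hdeg hzA'
    (by simp [hz.1.symm, hta]) (by simp [hzz', hz'a, hz'.2]) hz'.1.ne).2⟩

lemma InComplTriangle.inComplTriangle_insert_erase (hdeg : ∀ v, G.degree v ≤ d) (hd : 3 ≤ d)
    (hA : G.IsOptimal (d - 1) A) (ha : G.InComplTriangle A a) {t : V} (ht : t ∈ G.nbrIn A a)
    (hz : z ∈ G.nbrOut A t) (hza : z ≠ a) : G.InComplTriangle (insert a (A.erase t)) z := by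
  obtain ⟨z', hz', hz'a, hzz'⟩ := ha.exists_partner hdeg hd hA ht hz hza
  obtain ⟨hzA', hout⟩ := ha.nbrOut_insert_erase_eq hdeg hd hA ht hz hza hz' hz'a hzz'
  exact ⟨hzA', t, by simp [hout], z', by simp [hout], (mem_nbrOut.1 hz').1⟩

lemma InComplTriangle.nbrIn_insert_erase_eq (hdeg : ∀ v, G.degree v ≤ d) (hd : 3 ≤ d)
    (hno : G.CliqueFree d) (hA : G.IsOptimal (d - 1) A) (ha : G.InComplTriangle A a) {t : V}
    (ht : t ∈ G.nbrIn A a) (hz : z ∈ G.nbrOut A t) :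
    G.nbrIn (insert a (A.erase t)) z = (G.nbrIn A z).erase t :=
  nbrIn_insert_erase_of_not_adj fun h => ha.not_adj_of_mem_nbrOut hdeg hd hno hA ht hz h.symm

lemma InComplTriangle.not_adj_of_mem_erase_nbrIn (hdeg : ∀ v, G.degree v ≤ d) (hd : 3 ≤ d)
    (hno : G.CliqueFree d) (hA : G.IsOptimal (d - 1) A) (ha : G.InComplTriangle A a) {t w : V}
    (ht : t ∈ G.nbrIn A a) (hz : z ∈ G.nbrOut A t) (hza : z ≠ a)
    (hw : w ∈ (G.nbrIn A z).erase t) : ¬ G.Adj a w := by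
  intro haw
  have hC := (ha.inComplTriangle_insert_erase hdeg hd hA ht hz hza).isClosedClass hdeg hd
    (ha.isOptimal_insert_erase hdeg hd hA ht)
  rw [ha.nbrIn_insert_erase_eq hdeg hd hno hA ht hz] at hC
  have haw' : a ∈ G.nbrIn (insert a (A.erase t)) w := mem_nbrIn.2 ⟨haw.symm, mem_insert_self _ _⟩
  rw [hC.nbrIn_eq w hw] at haw'
  exact ha.not_adj_of_mem_nbrOut hdeg hd hno hA ht hz
    (mem_nbrIn.1 (mem_of_mem_erase (mem_of_mem_erase haw'))).1.symm

lemma InComplTriangle.isClosedClass_erase_nbrIn (hdeg : ∀ v, G.degree v ≤ d) (hd : 3 ≤ d)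
    (hno : G.CliqueFree d) (hA : G.IsOptimal (d - 1) A) (ha : G.InComplTriangle A a) {t : V}
    (ht : t ∈ G.nbrIn A a) (hz : z ∈ G.nbrOut A t) (hza : z ≠ a) :
    G.IsClosedClass d A ((G.nbrIn A z).erase t) := by
  have hC := (ha.inComplTriangle_insert_erase hdeg hd hA ht hz hza).isClosedClass hdeg hd
    (ha.isOptimal_insert_erase hdeg hd hA ht)
  rw [ha.nbrIn_insert_erase_eq hdeg hd hno hA ht hz] at hC
  refine ⟨(erase_subset _ _).trans nbrIn_subset, hC.isNClique, fun w hw => ?_⟩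
  have hnaw := ha.not_adj_of_mem_erase_nbrIn hdeg hd hno hA ht hz hza hw
  have hntw : t ∉ G.nbrIn A w := by
    intro htw
    have hwt : w ∈ G.nbrIn A t :=
      mem_nbrIn.2 ⟨(mem_nbrIn.1 htw).1.symm, nbrIn_subset (mem_of_mem_erase hw)⟩
    rw [(ha.nbrIn_eq_and_exists_nbrOut_eq hdeg hd hA ht).1] at hwt
    exact hnaw (mem_nbrIn.1 (mem_of_mem_erase hwt)).1
  rw [← hC.nbrIn_eq w hw, nbrIn_insert_erase_of_not_adj (fun h => hnaw h.symm),
    erase_eq_of_notMem hntw]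

lemma InComplTriangle.exists_nbrOut_eq_singleton (hdeg : ∀ v, G.degree v ≤ d) (hd : 3 ≤ d)
    (hno : G.CliqueFree d) (hA : G.IsOptimal (d - 1) A) (ha : G.InComplTriangle A a) {t : V}
    (ht : t ∈ G.nbrIn A a) (hz : z ∈ G.nbrOut A t) (hza : z ≠ a) :
    ∃ z' ∈ G.nbrOut A t, z' ≠ a ∧ G.nbrOut A z = {z'} := by
  obtain ⟨z', hz', hz'a, hzz'⟩ := ha.exists_partner hdeg hd hA ht hz hza
  obtain ⟨-, hout⟩ := ha.nbrOut_insert_erase_eq hdeg hd hA ht hz hza hz' hz'a hzz'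
  refine ⟨z', hz', hz'a, eq_singleton_iff_unique_mem.2
    ⟨mem_nbrOut.2 ⟨hzz', (mem_nbrOut.1 hz').2⟩, fun y hy => ?_⟩⟩
  have hy' := nbrOut_subset_nbrOut_insert_erase (x := t)
    (fun h => ha.not_adj_of_mem_nbrOut hdeg hd hno hA ht hz h.symm) hy
  rw [hout, mem_insert, mem_singleton] at hy'
  rcases hy' with rfl | rfl
  · exact absurd (nbrIn_subset ht) (mem_nbrOut.1 hy).2
  · rfl

/-- The structure that the optimal set `Q` forces around its triangle vertex `a` carries over to
`P`, because the vertices of `P` missing from `Q` lie in closed classes of `P`. -/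
structure IsWitness (d : ℕ) (P : Finset V) (a : V) (Q : Finset V) : Prop where
  isOptimal : G.IsOptimal (d - 1) Q
  notMem : a ∉ P
  inComplTriangle : G.InComplTriangle Q a
  isClosedClass : G.IsClosedClass d P (G.nbrIn Q a)
  covered : ∀ f ∈ P, f ∉ Q → ∃ D, f ∈ D ∧ G.IsClosedClass d P D

variable {P Q : Finset V} {t : V}

lemma IsWitness.notMem_of_mem_nbrOut (hW : G.IsWitness d P a Q) (ht : t ∈ G.nbrIn Q a)
    (hz : z ∈ G.nbrOut Q t) : z ∉ P := by
  intro hzP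
  obtain ⟨D, hzD, hD⟩ := hW.covered z hzP (mem_nbrOut.1 hz).2
  have htD : t ∈ D := by
    have htz : t ∈ G.nbrIn P z :=
      mem_nbrIn.2 ⟨(mem_nbrOut.1 hz).1.symm, hW.isClosedClass.subset ht⟩
    rw [hD.nbrIn_eq z hzD] at htz
    exact mem_of_mem_erase htz
  rw [← hW.isClosedClass.eq_of_mem hD ht htD] at hzD
  exact (mem_nbrOut.1 hz).2 (nbrIn_subset hzD)

lemma IsWitness.mem_iff_mem_of_adj (hdeg : ∀ v, G.degree v ≤ d) (hd : 3 ≤ d)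
    (hW : G.IsWitness d P a Q) (ht : t ∈ G.nbrIn Q a) (hy : G.Adj t y) : y ∈ P ↔ y ∈ Q := by
  refine ⟨fun hyP => ?_, fun hyQ => ?_⟩
  · by_contra hyQ
    exact hW.notMem_of_mem_nbrOut ht (mem_nbrOut.2 ⟨hy, hyQ⟩) hyP
  · have hyt : y ∈ G.nbrIn Q t := mem_nbrIn.2 ⟨hy, hyQ⟩
    rw [(hW.inComplTriangle.nbrIn_eq_and_exists_nbrOut_eq hdeg hd hW.isOptimal ht).1] at hyt
    exact hW.isClosedClass.subset (mem_of_mem_erase hyt)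

lemma IsWitness.nbrOut_eq (hdeg : ∀ v, G.degree v ≤ d) (hd : 3 ≤ d) (hW : G.IsWitness d P a Q)
    (ht : t ∈ G.nbrIn Q a) : G.nbrOut P t = G.nbrOut Q t :=
  nbrOut_congr fun _ hy => hW.mem_iff_mem_of_adj hdeg hd ht hy

lemma IsWitness.erase_nbrIn_subset (hdeg : ∀ v, G.degree v ≤ d) (hd : 4 ≤ d)
    (hno : G.CliqueFree d) (hP : G.IsOptimal (d - 1) P) (hW : G.IsWitness d P a Q)
    (ht : t ∈ G.nbrIn Q a) (hz : z ∈ G.nbrOut Q t) (hza : z ≠ a) :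
    (G.nbrIn Q z).erase t ⊆ P := by
  have hd3 : 3 ≤ d := by omega
  have ha := hW.inComplTriangle
  have hCz := ha.isClosedClass_erase_nbrIn hdeg hd3 hno hW.isOptimal ht hz hza
  obtain ⟨z', hz', -, hzout⟩ := ha.exists_nbrOut_eq_singleton hdeg hd3 hno hW.isOptimal ht hz hza
  -- otherwise the `(d - 2)`-clique that maximality of `P` puts among the `P`-neighbours of `z`
  -- contains `t` and a member of the class of `z`, but the `P`-neighbours of `t` form the class
  -- of `a`
  intro y₀ hy₀
  by_contra hy₀P
  obtain ⟨D, hDz, hD⟩ := hP.exists_isNClique_subset_nbrIn (hW.notMem_of_mem_nbrOut ht hz)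
  have hDsub : D ⊆ insert t (((G.nbrIn Q z).erase t).erase y₀) := by
    intro u hu
    obtain ⟨hzu, huP⟩ := mem_nbrIn.1 (hDz hu)
    rcases mem_nbrIn_or_mem_nbrOut Q hzu with huQ | huQ
    · rw [mem_insert, mem_erase, mem_erase]
      by_cases hut : u = t
      · exact Or.inl hut
      · exact Or.inr ⟨fun h => hy₀P (h ▸ huP), hut, huQ⟩
    · rw [hzout, mem_singleton] at huQ
      exact absurd (huQ ▸ huP) (hW.notMem_of_mem_nbrOut ht hz')
  have htD : t ∈ D := by
    by_contra htD
    have := card_le_card ((subset_insert_iff_of_notMem htD).1 hDsub)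
    rw [hD.card_eq, card_erase_of_mem hy₀, hCz.isNClique.card_eq] at this
    omega
  obtain ⟨w, hwD⟩ : (D.erase t).Nonempty := by
    rw [← card_pos, card_erase_of_mem htD, hD.card_eq]
    omega
  have hwt := ne_of_mem_erase hwD
  have hwCz : w ∈ (G.nbrIn Q z).erase t :=
    mem_of_mem_erase ((mem_insert.1 (hDsub (mem_of_mem_erase hwD))).resolve_left hwt)
  have htw : w ∈ G.nbrIn P t := mem_nbrIn.2
    ⟨hD.isClique (mem_coe.2 htD) (mem_coe.2 (mem_of_mem_erase hwD)) hwt.symm,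
      nbrIn_subset (hDz (mem_of_mem_erase hwD))⟩
  rw [hW.isClosedClass.nbrIn_eq t ht] at htw
  exact ha.not_adj_of_mem_erase_nbrIn hdeg hd3 hno hW.isOptimal ht hz hza hwCz
    (mem_nbrIn.1 (mem_of_mem_erase htw)).1

lemma IsWitness.isClosedClass_erase_nbrIn (hdeg : ∀ v, G.degree v ≤ d) (hd : 4 ≤ d)
    (hno : G.CliqueFree d) (hP : G.IsOptimal (d - 1) P) (hW : G.IsWitness d P a Q)
    (ht : t ∈ G.nbrIn Q a) (hz : z ∈ G.nbrOut Q t) (hza : z ≠ a) :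
    G.IsClosedClass d P ((G.nbrIn Q z).erase t) := by
  have hCz := hW.inComplTriangle.isClosedClass_erase_nbrIn hdeg (by omega) hno hW.isOptimal ht hz
    hza
  have hsub := hW.erase_nbrIn_subset hdeg hd hno hP ht hz hza
  refine ⟨hsub, hCz.isNClique, fun w hw => ?_⟩
  rw [← hCz.nbrIn_eq w hw]
  refine nbrIn_congr fun y hwy => ⟨fun hyP => ?_, fun hyQ => ?_⟩
  · by_contra hyQ
    obtain ⟨D, hyD, hD⟩ := hW.covered y hyP hyQ
    have hwD : w ∈ D := by
      have hwy' : w ∈ G.nbrIn P y := mem_nbrIn.2 ⟨hwy.symm, hsub hw⟩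
      rw [hD.nbrIn_eq y hyD] at hwy'
      exact mem_of_mem_erase hwy'
    rw [← hD.eq_of_isNClique hCz.isNClique hsub hw hwD] at hyD
    exact hyQ (hCz.subset hyD)
  · have hyw : y ∈ G.nbrIn Q w := mem_nbrIn.2 ⟨hwy, hyQ⟩
    rw [hCz.nbrIn_eq w hw] at hyw
    exact hsub (mem_of_mem_erase hyw)

lemma IsWitness.mem_iff_mem_of_adj_of_mem_nbrOut (hdeg : ∀ v, G.degree v ≤ d) (hd : 4 ≤ d)
    (hno : G.CliqueFree d) (hP : G.IsOptimal (d - 1) P) (hW : G.IsWitness d P a Q)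
    (ht : t ∈ G.nbrIn Q a) (hz : z ∈ G.nbrOut Q t) (hza : z ≠ a) (hzy : G.Adj z y) :
    y ∈ P ↔ y ∈ Q := by
  obtain ⟨z', hz', -, hzout⟩ :=
    hW.inComplTriangle.exists_nbrOut_eq_singleton hdeg (by omega) hno hW.isOptimal ht hz hza
  rcases mem_nbrIn_or_mem_nbrOut Q hzy with hy | hy
  · refine ⟨fun _ => nbrIn_subset hy, fun _ => ?_⟩
    by_cases hyt : y = t
    · exact hyt ▸ hW.isClosedClass.subset ht
    · exact hW.erase_nbrIn_subset hdeg hd hno hP ht hz hza (mem_erase.2 ⟨hyt, hy⟩)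
  · rw [hzout, mem_singleton] at hy
    subst hy
    exact ⟨fun h => absurd h (hW.notMem_of_mem_nbrOut ht hz'),
      fun h => absurd h (mem_nbrOut.1 hz').2⟩

lemma IsWitness.exists_nbrOut_eq_singleton (hdeg : ∀ v, G.degree v ≤ d) (hd : 4 ≤ d)
    (hno : G.CliqueFree d) (hP : G.IsOptimal (d - 1) P) (hW : G.IsWitness d P a Q)
    (ht : t ∈ G.nbrIn Q a) (hz : z ∈ G.nbrOut P t) (hza : z ≠ a) :
    ∃ z' ∈ G.nbrOut P t, z' ≠ a ∧ G.nbrOut P z = {z'} := by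
  rw [hW.nbrOut_eq hdeg (by omega) ht] at hz ⊢
  rw [nbrOut_congr fun _ => hW.mem_iff_mem_of_adj_of_mem_nbrOut hdeg hd hno hP ht hz hza]
  exact hW.inComplTriangle.exists_nbrOut_eq_singleton hdeg (by omega) hno hW.isOptimal ht hz hza

lemma IsWitness.nbrIn_insert_erase_eq (hdeg : ∀ v, G.degree v ≤ d) (hd : 4 ≤ d)
    (hno : G.CliqueFree d) (hP : G.IsOptimal (d - 1) P) (hW : G.IsWitness d P a Q)
    (ht : t ∈ G.nbrIn Q a) (hz : z ∈ G.nbrOut P t) (hza : z ≠ a) :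
    G.nbrIn (insert a (Q.erase t)) z = (G.nbrIn P z).erase t := by
  rw [hW.nbrOut_eq hdeg (by omega) ht] at hz
  rw [hW.inComplTriangle.nbrIn_insert_erase_eq hdeg (by omega) hno hW.isOptimal ht hz,
    nbrIn_congr fun _ => hW.mem_iff_mem_of_adj_of_mem_nbrOut hdeg hd hno hP ht hz hza]

lemma IsWitness.isWitness_insert_erase (hdeg : ∀ v, G.degree v ≤ d) (hd : 4 ≤ d)
    (hno : G.CliqueFree d) (hP : G.IsOptimal (d - 1) P) (hW : G.IsWitness d P a Q)
    (ht : t ∈ G.nbrIn Q a) (hz : z ∈ G.nbrOut P t) (hza : z ≠ a) :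
    G.IsWitness d P z (insert a (Q.erase t)) := by
  have hd3 : 3 ≤ d := by omega
  have ha := hW.inComplTriangle
  rw [hW.nbrOut_eq hdeg hd3 ht] at hz
  refine ⟨ha.isOptimal_insert_erase hdeg hd3 hW.isOptimal ht, hW.notMem_of_mem_nbrOut ht hz,
    ha.inComplTriangle_insert_erase hdeg hd3 hW.isOptimal ht hz hza, ?_, fun f hfP hfQ' => ?_⟩
  · rw [ha.nbrIn_insert_erase_eq hdeg hd3 hno hW.isOptimal ht hz]
    exact hW.isClosedClass_erase_nbrIn hdeg hd hno hP ht hz hza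
  · by_cases hft : f = t
    · exact ⟨G.nbrIn Q a, hft ▸ ht, hW.isClosedClass⟩
    · exact hW.covered f hfP fun hfQ => hfQ' (mem_insert_of_mem (mem_erase.2 ⟨hft, hfQ⟩))

lemma IsWitness.exists_nbrOut_eq (hdeg : ∀ v, G.degree v ≤ d) (hd : 3 ≤ d)
    (hW : G.IsWitness d P a Q) (ht : t ∈ G.nbrIn Q a) :
    ∃ r s, G.nbrOut P t = {a, r, s} ∧ r ≠ a ∧ s ≠ a ∧ r ≠ s := by
  obtain ⟨-, r, s, hts, hra, hsa, hrs⟩ :=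
    hW.inComplTriangle.nbrIn_eq_and_exists_nbrOut_eq hdeg hd hW.isOptimal ht
  exact ⟨r, s, (hW.nbrOut_eq hdeg hd ht).trans hts, hra, hsa, hrs.ne⟩

/-- The vertices outside `P` reached from a triangle of the complement of `P` by the swaps of
`IsWitness.isWitness_insert_erase`; `C` is the closed class of `P` that `a` dominates. -/
inductive IsActive (P : Finset V) : V → Finset V → Prop
  | triangle {a : V} : G.InComplTriangle P a → IsActive P a (G.nbrIn P a)
  | pair {a t z : V} {C : Finset V} : IsActive P a C → t ∈ C → z ∈ G.nbrOut P t → z ≠ a →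
      IsActive P z ((G.nbrIn P z).erase t)

def IsGood (P : Finset V) (v : V) : Prop :=
  (∃ C, G.IsActive P v C) ∨ ∃ a C, G.IsActive P a C ∧ v ∈ C

lemma IsActive.exists_isWitness (hdeg : ∀ v, G.degree v ≤ d) (hd : 4 ≤ d) (hno : G.CliqueFree d)
    (hP : G.IsOptimal (d - 1) P) (h : G.IsActive P a C) :
    ∃ Q, G.IsWitness d P a Q ∧ G.nbrIn Q a = C := by
  induction h with
  | triangle ha =>
    exact ⟨P, ⟨hP, ha.1, ha, ha.isClosedClass hdeg (by omega) hP, fun f hf hf' => absurd hf hf'⟩,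
      rfl⟩
  | pair _ ht hz hza ih =>
    obtain ⟨Q, hW, rfl⟩ := ih
    exact ⟨_, hW.isWitness_insert_erase hdeg hd hno hP ht hz hza,
      hW.nbrIn_insert_erase_eq hdeg hd hno hP ht hz hza⟩

lemma IsActive.exists_subset_insert (h : G.IsActive P a C) :
    ∃ t, C ⊆ G.nbrIn P a ∧ G.nbrIn P a ⊆ insert t C := by
  cases h with
  | triangle => exact ⟨a, Subset.rfl, subset_insert _ _⟩
  | @pair _ t _ _ _ _ _ _ => exact ⟨t, erase_subset _ _, insert_erase_subset _ _⟩

lemma IsGood.of_adj (hdeg : ∀ v, G.degree v ≤ d) (hd : 4 ≤ d) (hno : G.CliqueFree d)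
    (hP : G.IsOptimal (d - 1) P) (hv : G.IsGood P v) (hvy : G.Adj v y) : G.IsGood P y := by
  rcases hv with ⟨C, hC⟩ | ⟨a, C, ha, hvC⟩
  · cases hC with
    | triangle hv =>
      rcases mem_nbrIn_or_mem_nbrOut P hvy with hy | hy
      · exact Or.inr ⟨v, _, .triangle hv, hy⟩
      · exact Or.inl ⟨_, .triangle (hv.of_mem_nbrOut hdeg hP hy)⟩
    | @pair a t _ C' ha ht hz hza =>
      obtain ⟨Q, hW, rfl⟩ := ha.exists_isWitness hdeg hd hno hP
      obtain ⟨z', hz', hz'a, hvout⟩ := hW.exists_nbrOut_eq_singleton hdeg hd hno hP ht hz hza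
      rcases mem_nbrIn_or_mem_nbrOut P hvy with hy | hy
      · by_cases hyt : y = t
        · exact Or.inr ⟨a, _, ha, hyt ▸ ht⟩
        · exact Or.inr ⟨v, _, .pair ha ht hz hza, mem_erase.2 ⟨hyt, hy⟩⟩
      · rw [hvout, mem_singleton] at hy
        exact Or.inl ⟨_, .pair ha ht (hy ▸ hz') (hy ▸ hz'a)⟩
  · obtain ⟨Q, hW, rfl⟩ := ha.exists_isWitness hdeg hd hno hP
    rcases mem_nbrIn_or_mem_nbrOut P hvy with hy | hy
    · rw [hW.isClosedClass.nbrIn_eq v hvC] at hy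
      exact Or.inr ⟨a, _, ha, mem_of_mem_erase hy⟩
    · by_cases hya : y = a
      · exact Or.inl ⟨_, hya ▸ ha⟩
      · exact Or.inl ⟨_, .pair ha hvC hy hya⟩

def Dominates (P : Finset V) (q x : V) : Prop := insert x (G.nbrIn P x) ⊆ G.neighborFinset q

lemma IsClosedClass.dominates (hC : G.IsClosedClass d P C) (hCz : C ⊆ G.nbrIn P z) (hx : x ∈ C) :
    G.Dominates P z x := by
  rw [Dominates, hC.nbrIn_eq x hx, insert_erase hx]
  exact fun u hu => (mem_neighborFinset _ _ _).2 (mem_nbrIn.1 (hCz hu)).1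

lemma IsClosedClass.not_dominates (hd : 4 ≤ d) (hC : G.IsClosedClass d P C)
    (hD : G.IsClosedClass d P ((G.nbrIn P z).erase x)) (hx : x ∈ C) : ¬ G.Dominates P z x := by
  rw [Dominates, hC.nbrIn_eq x hx, insert_erase hx]
  intro hCz
  obtain ⟨y, hy⟩ : (C.erase x).Nonempty := by
    rw [← card_pos, card_erase_of_mem hx, hC.isNClique.card_eq]
    omega
  have hyD : y ∈ (G.nbrIn P z).erase x := mem_erase.2 ⟨ne_of_mem_erase hy,
    mem_nbrIn.2 ⟨(mem_neighborFinset _ _ _).1 (hCz (mem_of_mem_erase hy)),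
      hC.subset (mem_of_mem_erase hy)⟩⟩
  exact notMem_erase x _ (hC.eq_of_mem hD (mem_of_mem_erase hy) hyD ▸ hx)

lemma card_compl_mul_le_card
    (hout : ∀ q ∉ P, ∃ C, G.IsClosedClass d P C ∧ C ⊆ G.nbrIn P q)
    (hin : ∀ x ∈ P, ∃ a, ∀ q ∈ G.nbrOut P x, G.Dominates P q x → q = a) :
    #Pᶜ * (d - 2) ≤ #P := by
  classical
  simpa using card_mul_le_card_mul (s := Pᶜ) (t := P) (G.Dominates P) (n := 1)
    (fun q hq => by
      obtain ⟨C, hC, hCq⟩ := hout q (mem_compl.1 hq)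
      rw [← hC.isNClique.card_eq]
      exact card_le_card fun y hy => mem_filter.2 ⟨hC.subset hy, hC.dominates hCq hy⟩)
    (fun x hx => by
      obtain ⟨a, ha⟩ := hin x hx
      refine card_le_one.2 fun q hq q' hq' => ?_
      have hdom : ∀ q ∈ Pᶜ.bipartiteBelow (G.Dominates P) x, q = a := fun q hq => by
        obtain ⟨hqP, hqx⟩ := mem_filter.1 hq
        exact ha q (mem_nbrOut.2 ⟨((mem_neighborFinset _ _ _).1 (hqx (mem_insert_self _ _))).symm,
          mem_compl.1 hqP⟩) hqx
      rw [hdom q hq, hdom q' hq'])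

lemma two_mul_card_le_card_compl
    (hout : ∀ q ∉ P, ∃ t, ∀ x ∈ G.nbrIn P q, ¬ G.Dominates P q x → x = t)
    (hin : ∀ x ∈ P, ∃ r ∈ G.nbrOut P x, ∃ s ∈ G.nbrOut P x,
      r ≠ s ∧ ¬ G.Dominates P r x ∧ ¬ G.Dominates P s x) :
    2 * #P ≤ #Pᶜ := by
  classical
  let R (x q : V) : Prop := G.Adj x q ∧ ¬ G.Dominates P q x
  simpa [mul_comm] using card_mul_le_card_mul (s := P) (t := Pᶜ) R (m := 2) (n := 1)
    (fun x hx => by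
      obtain ⟨r, hr, s, hs, hrs, hrx, hsx⟩ := hin x hx
      rw [mem_nbrOut] at hr hs
      rw [← card_pair hrs]
      exact card_le_card (insert_subset (mem_filter.2 ⟨mem_compl.2 hr.2, hr.1, hrx⟩)
        (singleton_subset_iff.2 (mem_filter.2 ⟨mem_compl.2 hs.2, hs.1, hsx⟩))))
    (fun q hq => by
      obtain ⟨t, ht⟩ := hout q (mem_compl.1 hq)
      refine card_le_one.2 fun x hx x' hx' => ?_
      have hnd : ∀ x ∈ P.bipartiteBelow R q, x = t := fun x hx => by
        obtain ⟨hxP, hxq, hnd⟩ := mem_filter.1 hx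
        exact ht x (mem_nbrIn.2 ⟨hxq.symm, hxP⟩) hnd
      rw [hnd x hx, hnd x' hx'])

lemma IsGood.exists_isClosedClass_of_notMem (hdeg : ∀ v, G.degree v ≤ d) (hd : 4 ≤ d)
    (hno : G.CliqueFree d) (hP : G.IsOptimal (d - 1) P) (hz : G.IsGood P z) (hzP : z ∉ P) :
    ∃ t C, G.IsClosedClass d P C ∧ C ⊆ G.nbrIn P z ∧ G.nbrIn P z ⊆ insert t C := by
  rcases hz with ⟨C, hC⟩ | ⟨a, C, ha, hzC⟩
  · obtain ⟨Q, hW, rfl⟩ := hC.exists_isWitness hdeg hd hno hP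
    obtain ⟨t, h1, h2⟩ := hC.exists_subset_insert
    exact ⟨t, _, hW.isClosedClass, h1, h2⟩
  · obtain ⟨Q, hW, rfl⟩ := ha.exists_isWitness hdeg hd hno hP
    exact absurd (hW.isClosedClass.subset hzC) hzP

lemma IsGood.exists_nbrOut_eq_of_mem (hdeg : ∀ v, G.degree v ≤ d) (hd : 4 ≤ d)
    (hno : G.CliqueFree d) (hP : G.IsOptimal (d - 1) P) (hx : G.IsGood P x) (hxP : x ∈ P) :
    ∃ a r s, G.nbrOut P x = {a, r, s} ∧ r ≠ a ∧ s ≠ a ∧ r ≠ s ∧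
      ∀ q ∈ G.nbrOut P x, q ≠ a → ¬ G.Dominates P q x := by
  rcases hx with ⟨C, hC⟩ | ⟨a, C, ha, hxC⟩
  · obtain ⟨Q, hW, -⟩ := hC.exists_isWitness hdeg hd hno hP
    exact absurd hxP hW.notMem
  · obtain ⟨Q, hW, rfl⟩ := ha.exists_isWitness hdeg hd hno hP
    obtain ⟨r, s, hxout, hra, hsa, hrs⟩ := hW.exists_nbrOut_eq hdeg (by omega) hxC
    refine ⟨a, r, s, hxout, hra, hsa, hrs, fun q hq hqa => ?_⟩
    obtain ⟨Q', hW', hQ'⟩ := (IsActive.pair ha hxC hq hqa).exists_isWitness hdeg hd hno hP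
    exact hW.isClosedClass.not_dominates hd (hQ' ▸ hW'.isClosedClass) hxC

lemma compl_eq_empty_of_forall_isGood (hdeg : ∀ v, G.degree v ≤ d) (hd : 4 ≤ d)
    (hno : G.CliqueFree d) (hP : G.IsOptimal (d - 1) P) (hgood : ∀ v, G.IsGood P v) : Pᶜ = ∅ := by
  have hout := fun q => (hgood q).exists_isClosedClass_of_notMem hdeg hd hno hP
  have hin := fun x => (hgood x).exists_nbrOut_eq_of_mem hdeg hd hno hP
  have h1 : #Pᶜ * (d - 2) ≤ #P := card_compl_mul_le_card
    (fun q hq => by obtain ⟨-, C, hC, hCq, -⟩ := hout q hq; exact ⟨C, hC, hCq⟩)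
    (fun x hx => by
      obtain ⟨a, -, -, -, -, -, -, hnd⟩ := hin x hx
      exact ⟨a, fun q hq hqx => by_contra fun hqa => hnd q hq hqa hqx⟩)
  have h2 : 2 * #P ≤ #Pᶜ := two_mul_card_le_card_compl
    (fun q hq => by
      obtain ⟨t, C, hC, hCq, hqC⟩ := hout q hq
      refine ⟨t, fun x hx hnd => ?_⟩
      rcases mem_insert.1 (hqC hx) with rfl | hxC
      · rfl
      · exact absurd (hC.dominates hCq hxC) hnd)
    (fun x hx => by
      obtain ⟨a, r, s, hxout, hra, hsa, hrs, hnd⟩ := hin x hx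
      have hr : r ∈ G.nbrOut P x := by simp [hxout]
      have hs : s ∈ G.nbrOut P x := by simp [hxout]
      exact ⟨r, hr, s, hs, hrs, hnd r hr hra, hnd s hs hsa⟩)
  have h3 : #Pᶜ * 2 ≤ #Pᶜ * (d - 2) := Nat.mul_le_mul_left _ (by omega)
  exact card_eq_zero.1 (by omega)

theorem exists_cliqueFreeOn_and_cliqueFreeOn_compl (hdeg : ∀ v, G.degree v ≤ d) (hd : 4 ≤ d)
    (hno : G.CliqueFree d) (hG : G.Preconnected) :
    ∃ A : Finset V, G.CliqueFreeOn A (d - 1) ∧ G.CliqueFreeOn (Aᶜ : Finset V) 3 := by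
  obtain ⟨P, hP⟩ := G.exists_isOptimal (k := d - 1) (by omega)
  refine ⟨P, hP.cliqueFreeOn, fun t ht h3 => ?_⟩
  obtain ⟨a, b, c, hab, hac, hbc, rfl⟩ := is3Clique_iff.1 h3
  simp only [coe_insert, coe_singleton, coe_compl, Set.insert_subset_iff, Set.mem_compl_iff,
    mem_coe, Set.singleton_subset_iff] at ht
  have ha : G.InComplTriangle P a :=
    ⟨ht.1, b, mem_nbrOut.2 ⟨hab, ht.2.1⟩, c, mem_nbrOut.2 ⟨hac, ht.2.2⟩, hbc⟩
  have hgood : ∀ v, G.IsGood P v :=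
    hG.forall_of_adj (fun _ _ hvw hv => hv.of_adj hdeg hd hno hP hvw) (Or.inl ⟨_, .triangle ha⟩)
  exact notMem_empty a (compl_eq_empty_of_forall_isGood hdeg hd hno hP hgood ▸ mem_compl.2 ht.1)

end SimpleGraph

open SimpleGraph

theorem statement6 {V : Type} [Fintype V] [DecidableEq V]
    (H : SimpleGraph V) [DecidableRel H.Adj]
    (hconn : H.Connected) (d : ℕ) (hd : H.maxDegree = d) (hd6 : 6 ≤ d)
    (hω : H.cliqueNum = d - 1) :
    ∃ V₁ V₂ : Finset V, Disjoint V₁ V₂ ∧ V₁ ∪ V₂ = Finset.univ ∧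
      -- `H[V₁]` contains no clique of size `d - 1`
      (∀ t : Finset V, ↑t ⊆ (V₁ : Set V) → ¬ H.IsNClique (d - 1) t) ∧
      -- `H[V₂]` contains no triangle
      (∀ t : Finset V, ↑t ⊆ (V₂ : Set V) → ¬ H.IsNClique 3 t) := by
  have hdeg : ∀ v, H.degree v ≤ d := fun v => hd ▸ H.degree_le_maxDegree v
  have hno : H.CliqueFree d := fun s hs => by
    have := IsClique.card_le_cliqueNum (tc := hs.isClique)
    rw [hs.card_eq, hω] at this
    omega
  obtain ⟨A, hA, hAc⟩ :=
    H.exists_cliqueFreeOn_and_cliqueFreeOn_compl hdeg (by omega) hno hconn.preconnected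
  exact ⟨A, Aᶜ, disjoint_compl_right, Finset.union_compl A, fun _ ht => hA ht, fun _ ht => hAc ht⟩
end
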